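/- (Fundamental inequality when f is Lipschitz differentiable.) Suppose f is differentiable with (1/β_f)-Lipschitz gradient, β_f > 0. Let γ ∈ (0, 2β_V), λ > 0, z ∈ H, z⁺ := T_λ(z), z* a fixed point of T, and x* := P_V z*. Then, with x_h := P_V z and x_f := prox_{γf}(refl_{χV}(z − γ∇h(z))): if γ ≤ β_f, then 2γλ(f(x_h) + h(x_h) − f(x*) − h(x*)) ≤ ‖z − z*‖² − ‖z⁺ − z*‖² + (1 + (γ − β_f)/(β_f λ))‖z − z⁺‖² + 2γ⟪∇h(x_h) − ∇h(x*), z − z⁺⟫; and if γ > β_f, then 2γλ(f(x_h) + h(x_h) − f(x*) − h(x*)) ≤ (1 + (γ − β_f)/(2β_f))(‖z − z*‖² − ‖z⁺ − z*‖² + ‖z − z⁺‖²) + 2γ(1 + (γ − β_f)/(2β_f))⟪∇h(x_h) − ∇h(x*), z − z⁺⟫. -/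

import Mathlib

/-!
With `u = x_h - x_f`, `w = x_h - x*` and `d = ∇f(x_f) - ∇f(x*)`, the prox optimality conditions at
`z` and at the fixed point read `γ(∇f(x_f) + ∇h(x_h)) = 2x_h - z - x_f` and
`γ(∇f(x*) + ∇h(x*)) = x* - z*`, while `z - z⁺ = λu`. The descent lemma from `x_f` to `x_h`, the
lower bound `f(x_f) + ⟪∇f(x_f), x* - x_f⟫ + (β_f/2)‖d‖² ≤ f(x*)` and convexity of `h` bound the
objective gap by `⟪u, w⟫ + γ‖u‖²/(2β_f) - γβ_f‖d‖²/2`. Expressing `⟪u, w⟫` through the residual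
`z - z*` leaves the error `-β_f‖u - γd‖² + β_fγ(γ - β_f)‖d‖²`, which is nonpositive when `γ ≤ β_f`;
when `γ > β_f` it is absorbed by the cocoercivity of `∇f`, the monotonicity of `∇h` and the
orthogonality of `z - x_h` to `V`.
-/

open scoped RealInnerProductSpace
open Set

section Gradient

variable {H : Type*} [NormedAddCommGroup H] [InnerProductSpace ℝ H] [CompleteSpace H]
  {f : H → ℝ} {f' : H → H}

theorem HasGradientAt.hasDerivAt_comp_add_smul {x d g : H} {t : ℝ}
    (hf : HasGradientAt f g (x + t • d)) :
    HasDerivAt (fun s : ℝ => f (x + s • d)) ⟪g, d⟫ t := by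
  have hline : HasDerivAt (fun s : ℝ => x + s • d) d t := by
    simpa using ((hasDerivAt_id t).smul_const d).const_add x
  simpa [InnerProductSpace.toDual_apply_apply, Function.comp_def] using
    hf.hasFDerivAt.comp_hasDerivAt t hline

theorem le_add_inner_gradient_add_norm_sq {β : ℝ} (hβ : 0 < β)
    (hf' : ∀ x, HasGradientAt f (f' x) x) (hlip : LipschitzWith (1 / β).toNNReal f') (x y : H) :
    f y ≤ f x + ⟪f' x, y - x⟫ + ‖y - x‖ ^ 2 / (2 * β) := by
  set d := y - x
  have hψ : ∀ t, HasDerivAt (fun s : ℝ => f (x + s • d) - f x - s * ⟪f' x, d⟫)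
      (⟪f' (x + t • d), d⟫ - ⟪f' x, d⟫) t := fun t =>
    ((hf' _).hasDerivAt_comp_add_smul.sub_const _).sub (hasDerivAt_mul_const _)
  have hB : ∀ t, HasDerivAt (fun s : ℝ => s ^ 2 * (‖d‖ ^ 2 / (2 * β)))
      (2 * t * (‖d‖ ^ 2 / (2 * β))) t := fun t => by
    simpa using (hasDerivAt_pow 2 t).mul_const (‖d‖ ^ 2 / (2 * β))
  have hslope : ∀ t ∈ Ico (0 : ℝ) 1,
      ⟪f' (x + t • d), d⟫ - ⟪f' x, d⟫ ≤ 2 * t * (‖d‖ ^ 2 / (2 * β)) := fun t ht => by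
    have hlip' := hlip.dist_le_mul (x + t • d) x
    rw [Real.coe_toNNReal _ (one_div_pos.2 hβ).le, dist_eq_norm, dist_eq_norm,
      add_sub_cancel_left] at hlip'
    rw [norm_smul, Real.norm_of_nonneg ht.1] at hlip'
    calc ⟪f' (x + t • d), d⟫ - ⟪f' x, d⟫ = ⟪f' (x + t • d) - f' x, d⟫ := (inner_sub_left ..).symm
      _ ≤ ‖f' (x + t • d) - f' x‖ * ‖d‖ := real_inner_le_norm _ _
      _ ≤ (1 / β) * (t * ‖d‖) * ‖d‖ := by gcongr
      _ = 2 * t * (‖d‖ ^ 2 / (2 * β)) := by field_simp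
  have := image_le_of_deriv_right_le_deriv_boundary
    (fun t _ => (hψ t).continuousAt.continuousWithinAt) (fun t _ => (hψ t).hasDerivWithinAt)
    (by simp) (fun t _ => (hB t).continuousAt.continuousWithinAt)
    (fun t _ => (hB t).hasDerivWithinAt) hslope (right_mem_Icc.2 zero_le_one)
  rw [one_smul, one_mul, one_pow, show x + d = y from add_sub_cancel x y] at this
  linarith

theorem ConvexOn.add_inner_gradient_le (hf : ConvexOn ℝ univ f) {x g : H}
    (hg : HasGradientAt f g x) (y : H) : f x + ⟪g, y - x⟫ ≤ f y := by
  have hline : ConvexOn ℝ univ (fun s : ℝ => f (x + s • (y - x))) := by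
    simpa [Function.comp_def, AffineMap.lineMap_apply, add_comm] using
      hf.comp_affineMap (AffineMap.lineMap x y)
  have hderiv : HasDerivAt (fun s : ℝ => f (x + s • (y - x))) ⟪g, y - x⟫ 0 :=
    (by simpa using hg : HasGradientAt f g (x + (0 : ℝ) • (y - x))).hasDerivAt_comp_add_smul
  have := hline.le_slope_of_hasDerivAt (mem_univ 0) (mem_univ 1) one_pos hderiv
  simp only [slope_def_field, one_smul, add_sub_cancel, zero_smul, add_zero, sub_zero,
    div_one] at this
  linarith

theorem ConvexOn.inner_gradient_sub_nonneg (hf : ConvexOn ℝ univ f)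
    (hf' : ∀ x, HasGradientAt f (f' x) x) (x y : H) : 0 ≤ ⟪f' x - f' y, x - y⟫ := by
  have hxy := hf.add_inner_gradient_le (hf' x) y
  have hyx := hf.add_inner_gradient_le (hf' y) x
  rw [← neg_sub x y, inner_neg_right] at hxy
  rw [inner_sub_left]
  linarith

theorem ConvexOn.add_inner_gradient_add_norm_sq_le (hf : ConvexOn ℝ univ f) {β : ℝ} (hβ : 0 < β)
    (hf' : ∀ x, HasGradientAt f (f' x) x) (hlip : LipschitzWith (1 / β).toNNReal f') (x y : H) :
    f x + ⟪f' x, y - x⟫ + β / 2 * ‖f' y - f' x‖ ^ 2 ≤ f y := by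
  -- test convexity and the descent lemma at the gradient step from `y` for `f - ⟪f' x, ·⟫`
  set Δ := f' y - f' x
  have hconv := hf.add_inner_gradient_le (hf' x) (y - β • Δ)
  have hdesc := le_add_inner_gradient_add_norm_sq hβ hf' hlip y (y - β • Δ)
  rw [sub_right_comm, inner_sub_right, real_inner_smul_right] at hconv
  rw [sub_sub_cancel_left, inner_neg_right, norm_neg, real_inner_smul_right, norm_smul,
    Real.norm_of_nonneg hβ.le] at hdesc
  have hΔ : ⟪f' y, Δ⟫ - ⟪f' x, Δ⟫ = ‖Δ‖ ^ 2 := by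
    rw [← inner_sub_left, real_inner_self_eq_norm_sq]
  have hsq : (β * ‖Δ‖) ^ 2 / (2 * β) = β / 2 * ‖Δ‖ ^ 2 := by field_simp
  linear_combination hconv + hdesc - β * hΔ + hsq

theorem ConvexOn.three_point_descent (hf : ConvexOn ℝ univ f) {β : ℝ} (hβ : 0 < β)
    (hf' : ∀ x, HasGradientAt f (f' x) x) (hlip : LipschitzWith (1 / β).toNNReal f') (x y z : H) :
    f x - f z ≤ ⟪f' y, x - z⟫ + ‖x - y‖ ^ 2 / (2 * β) - β / 2 * ‖f' y - f' z‖ ^ 2 := by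
  have hdesc := le_add_inner_gradient_add_norm_sq hβ hf' hlip y x
  have hlow := hf.add_inner_gradient_add_norm_sq_le hβ hf' hlip y z
  rw [← norm_neg, neg_sub] at hlow
  have : ⟪f' y, x - z⟫ = ⟪f' y, x - y⟫ - ⟪f' y, z - y⟫ := by
    rw [← inner_sub_right, sub_sub_sub_cancel_right]
  linarith

theorem ConvexOn.gradient_cocoercive (hf : ConvexOn ℝ univ f) {β : ℝ} (hβ : 0 < β)
    (hf' : ∀ x, HasGradientAt f (f' x) x) (hlip : LipschitzWith (1 / β).toNNReal f') (x y : H) :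
    β * ‖f' x - f' y‖ ^ 2 ≤ ⟪f' x - f' y, x - y⟫ := by
  have hxy := hf.add_inner_gradient_add_norm_sq_le hβ hf' hlip x y
  have hyx := hf.add_inner_gradient_add_norm_sq_le hβ hf' hlip y x
  rw [← norm_neg, neg_sub, ← neg_sub x y, inner_neg_right] at hxy
  rw [inner_sub_left]
  linarith

theorem IsLocalMin.smul_gradient_eq_sub {γ : ℝ} (hγ : γ ≠ 0) {x p g : H}
    (hf : HasGradientAt f g p) (hp : IsLocalMin (fun y => f y + 1 / (2 * γ) * ‖y - x‖ ^ 2) p) :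
    γ • g = x - p := by
  have hderiv := hf.hasFDerivAt.add
    ((((hasStrictFDerivAt_norm_sq (p - x)).hasFDerivAt.comp p
      ((hasFDerivAt_id p).sub_const x))).const_mul (1 / (2 * γ)))
  have hzero : ∀ v, ⟪g + γ⁻¹ • (p - x), v⟫ = 0 := fun v => by
    have := congrArg (fun L => L v) (hp.hasFDerivAt_eq_zero hderiv)
    simp only [one_div, mul_inv_rev, map_sub, ContinuousLinearMap.comp_id, add_apply,
      InnerProductSpace.toDual_apply_apply, smul_apply, sub_apply, coe_innerSL_apply, nsmul_eq_mul,
      Nat.cast_ofNat, smul_eq_mul, zero_apply] at this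
    rw [inner_add_left, real_inner_smul_left, inner_sub_left]
    linear_combination this
  have hcrit := congrArg (γ • ·) (inner_self_eq_zero.1 (hzero _))
  simp only [smul_add, smul_smul, mul_inv_cancel₀ hγ, one_smul, smul_zero] at hcrit
  linear_combination (norm := module) hcrit

end Gradient

section Adjoint

variable {E F : Type*} [NormedAddCommGroup E] [InnerProductSpace ℝ E] [CompleteSpace E]
  [NormedAddCommGroup F] [InnerProductSpace ℝ F] [CompleteSpace F]

theorem HasGradientAt.comp_continuousLinearMap {g : F → ℝ} {g' : F} (A : E →L[ℝ] F) {x : E}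
    (hg : HasGradientAt g g' (A x)) : HasGradientAt (g ∘ A) (A.adjoint g') x := by
  rw [hasGradientAt_iff_hasFDerivAt]
  refine (hg.hasFDerivAt.comp x A.hasFDerivAt).congr_fderiv ?_
  ext v
  simp [ContinuousLinearMap.adjoint_inner_left]

theorem Submodule.hasGradientAt_comp_starProjection (V : Submodule ℝ E) [V.HasOrthogonalProjection]
    {g : E → ℝ} {g' : E} {x : E} (hg : HasGradientAt g g' (V.starProjection x)) :
    HasGradientAt (g ∘ V.starProjection) (V.starProjection g') x := by
  simpa [(isSelfAdjoint_starProjection V).adjoint_eq] using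
    hg.comp_continuousLinearMap V.starProjection

end Adjoint

section FDRS

variable {H : Type*} [NormedAddCommGroup H] [InnerProductSpace ℝ H]

theorem Submodule.inner_starProjection_self (V : Submodule ℝ H) [V.HasOrthogonalProjection]
    (x : H) : ⟪V.starProjection x, x⟫ = ‖V.starProjection x‖ ^ 2 := by
  have := V.starProjection_inner_eq_zero x _ (V.starProjection_apply_mem x)
  rw [inner_sub_left, real_inner_comm, real_inner_self_eq_norm_sq] at this
  linarith

theorem fdrs_step_identities [CompleteSpace H] (V : Submodule ℝ H) [V.HasOrthogonalProjection]
    {f : H → ℝ} {f' prox gradh T : H → H} {γ : ℝ} (hγ : γ ≠ 0)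
    (hf' : ∀ x, HasGradientAt f (f' x) x)
    (hprox : ∀ x, IsMinOn (fun y => f y + (1 / (2 * γ)) * ‖y - x‖ ^ 2) univ (prox x))
    (hT : ∀ z, T z = (1 / 2 : ℝ) • (z - γ • gradh z)
        + (1 / 2 : ℝ) • ((2 : ℝ) • prox ((2 : ℝ) • V.starProjection (z - γ • gradh z)
            - (z - γ • gradh z))
          - ((2 : ℝ) • V.starProjection (z - γ • gradh z) - (z - γ • gradh z))))
    (hgradV : ∀ x, gradh x ∈ V) (hgradP : ∀ x, gradh (V.starProjection x) = gradh x)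
    {z xh xf : H} (hxh : xh = V.starProjection z)
    (hxf : xf = prox ((2 : ℝ) • V.starProjection (z - γ • gradh z) - (z - γ • gradh z))) :
    T z = xf + (z - xh) ∧ γ • (f' xf + gradh xh) = (2 : ℝ) • xh - z - xf := by
  have hopt := ((hprox ((2 : ℝ) • V.starProjection (z - γ • gradh z)
    - (z - γ • gradh z))).isLocalMin Filter.univ_mem).smul_gradient_eq_sub hγ (hf' _)
  have hproj : V.starProjection (z - γ • gradh z) = V.starProjection z - γ • gradh z := by
    rw [map_sub, map_smul, V.starProjection_eq_self_iff.2 (hgradV z)]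
  subst hxh hxf
  rw [hproj] at hopt ⊢
  refine ⟨by rw [hT, hproj]; module, ?_⟩
  rw [smul_add, hopt, hgradP]
  module

theorem fdrs_value_gap [CompleteSpace H] {f h : H → ℝ} {f' : H → H} {β γ : ℝ}
    (hf : ConvexOn ℝ univ f) (hβ : 0 < β) (hf' : ∀ x, HasGradientAt f (f' x) x)
    (hlip : LipschitzWith (1 / β).toNNReal f') (hh : ConvexOn ℝ univ h) (hγ : 0 ≤ γ)
    {z xh xf xs g : H} (hg : HasGradientAt h g xh)
    (hopt : γ • (f' xf + g) = (2 : ℝ) • xh - z - xf) (horth : ⟪z - xh, xh - xs⟫ = 0) :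
    2 * β * γ * (f xh + h xh - f xs - h xs)
      ≤ 2 * β * ⟪xh - xf, xh - xs⟫ + γ * ‖xh - xf‖ ^ 2 - γ * β ^ 2 * ‖f' xf - f' xs‖ ^ 2 := by
  have hfgap := hf.three_point_descent hβ hf' hlip xh xf xs
  have hhgap := hh.add_inner_gradient_le hg xs
  rw [← neg_sub xh xs, inner_neg_right] at hhgap
  have hinner : ⟪γ • (f' xf + g), xh - xs⟫ = ⟪xh - xf, xh - xs⟫ := by
    rw [hopt, show (2 : ℝ) • xh - z - xf = (xh - xf) - (z - xh) by module, inner_sub_left, horth,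
      sub_zero]
  rw [real_inner_smul_left, inner_add_left] at hinner
  calc 2 * β * γ * (f xh + h xh - f xs - h xs)
      ≤ 2 * β * γ * (⟪f' xf, xh - xs⟫ + ⟪g, xh - xs⟫ + ‖xh - xf‖ ^ 2 / (2 * β)
          - β / 2 * ‖f' xf - f' xs‖ ^ 2) :=
        mul_le_mul_of_nonneg_left (by linarith) (by positivity)
    _ = _ := by rw [← hinner]; field_simp

end FDRS

section Estimates

variable {E : Type*} [NormedAddCommGroup E] [InnerProductSpace ℝ E] {r u w d e : E}
  {γ β lam Δ : ℝ}

theorem norm_sq_sub_norm_sq_sub_smul (r u : E) (c : ℝ) :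
    ‖r‖ ^ 2 - ‖r - c • u‖ ^ 2 = 2 * c * ⟪r, u⟫ - c ^ 2 * ‖u‖ ^ 2 := by
  rw [norm_sub_sq_real, real_inner_smul_right, norm_smul, mul_pow, Real.norm_eq_abs, sq_abs]
  ring

theorem inner_residual_add (hr : r = u + w - γ • d - γ • e) :
    ⟪r, u⟫ + γ * ⟪e, u⟫ = ‖u‖ ^ 2 + ⟪u, w⟫ - γ * ⟪d, u⟫ := by
  rw [hr]
  simp only [inner_add_left, inner_sub_left, real_inner_smul_left, real_inner_self_eq_norm_sq,
    real_inner_comm u w]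
  ring

theorem fdrs_gap_le_residual
    (hgap : 2 * β * γ * Δ ≤ 2 * β * ⟪u, w⟫ + γ * ‖u‖ ^ 2 - γ * β ^ 2 * ‖d‖ ^ 2)
    (hr : r = u + w - γ • d - γ • e) :
    2 * β * γ * Δ ≤ 2 * β * (⟪r, u⟫ + γ * ⟪e, u⟫) + (γ - β) * ‖u‖ ^ 2
      - β * ‖u - γ • d‖ ^ 2 + β * γ * (γ - β) * ‖d‖ ^ 2 := by
  rw [inner_residual_add hr, norm_sub_sq_real, norm_smul, mul_pow, Real.norm_eq_abs, sq_abs,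
    real_inner_smul_right, real_inner_comm d u]
  linarith

theorem fdrs_estimate_of_le (hβ : 0 < β) (hγ : 0 ≤ γ) (hγβ : γ ≤ β) (hlam : 0 < lam)
    (hgap : 2 * β * γ * Δ ≤ 2 * β * ⟪u, w⟫ + γ * ‖u‖ ^ 2 - γ * β ^ 2 * ‖d‖ ^ 2)
    (hr : r = u + w - γ • d - γ • e) :
    2 * γ * lam * Δ ≤ ‖r‖ ^ 2 - ‖r - lam • u‖ ^ 2 + (1 + (γ - β) / (β * lam)) * ‖lam • u‖ ^ 2
      + 2 * γ * ⟪e, lam • u⟫ := by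
  have key : 2 * β * γ * Δ ≤ 2 * β * (⟪r, u⟫ + γ * ⟪e, u⟫) + (γ - β) * ‖u‖ ^ 2 := by
    have : β * γ * (γ - β) * ‖d‖ ^ 2 ≤ 0 :=
      mul_nonpos_of_nonpos_of_nonneg (mul_nonpos_of_nonneg_of_nonpos (by positivity)
        (sub_nonpos.2 hγβ)) (sq_nonneg _)
    linarith [fdrs_gap_le_residual hgap hr, mul_nonneg hβ.le (sq_nonneg ‖u - γ • d‖)]
  have hrhs : ‖r‖ ^ 2 - ‖r - lam • u‖ ^ 2 + (1 + (γ - β) / (β * lam)) * ‖lam • u‖ ^ 2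
      + 2 * γ * ⟪e, lam • u⟫
      = lam / β * (2 * β * (⟪r, u⟫ + γ * ⟪e, u⟫) + (γ - β) * ‖u‖ ^ 2) := by
    rw [norm_sq_sub_norm_sq_sub_smul, norm_smul, mul_pow, Real.norm_eq_abs, sq_abs,
      real_inner_smul_right]
    field_simp
    ring
  rw [hrhs]
  calc 2 * γ * lam * Δ = lam / β * (2 * β * γ * Δ) := by field_simp
    _ ≤ _ := by gcongr

theorem fdrs_estimate_of_ge (hβ : 0 < β) (hγ : 0 ≤ γ) (hγβ : β ≤ γ) (hlam : 0 < lam)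
    (hgap : 2 * β * γ * Δ ≤ 2 * β * ⟪u, w⟫ + γ * ‖u‖ ^ 2 - γ * β ^ 2 * ‖d‖ ^ 2)
    (hr : r = u + w - γ • d - γ • e) (hrw : ⟪w, r⟫ = ‖w‖ ^ 2)
    (hcoco : β * ‖d‖ ^ 2 ≤ ⟪d, w - u⟫) (hmono : 0 ≤ ⟪e, w⟫) :
    2 * γ * lam * Δ ≤ (1 + (γ - β) / (2 * β)) * (‖r‖ ^ 2 - ‖r - lam • u‖ ^ 2 + ‖lam • u‖ ^ 2)
      + 2 * γ * (1 + (γ - β) / (2 * β)) * ⟪e, lam • u⟫ := by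
  -- `w ⊥ (r - w)` turns the monotonicity of `∇h` into `⟪u - γ d, w⟫ ≥ 0`
  have hwu : γ * ⟪e, w⟫ = ⟪u, w⟫ - γ * ⟪d, w⟫ := by
    rw [hr] at hrw
    simp only [inner_add_right, inner_sub_right, real_inner_smul_right, real_inner_self_eq_norm_sq,
      real_inner_comm u w, real_inner_comm d w, real_inner_comm e w] at hrw
    linarith
  have key : 2 * β * γ * Δ ≤ (γ + β) * (⟪r, u⟫ + γ * ⟪e, u⟫) := by
    rw [inner_sub_right] at hcoco
    have h1 : 0 ≤ (γ - β) * (γ * ⟪e, w⟫) := mul_nonneg (sub_nonneg.2 hγβ) (mul_nonneg hγ hmono)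
    have h2 : 0 ≤ (γ - β) * γ * (⟪d, w⟫ - ⟪d, u⟫ - β * ‖d‖ ^ 2) :=
      mul_nonneg (mul_nonneg (sub_nonneg.2 hγβ) hγ) (by linarith)
    nlinarith [fdrs_gap_le_residual hgap hr, inner_residual_add hr,
      mul_nonneg hβ.le (sq_nonneg ‖u - γ • d‖)]
  have hrhs : (1 + (γ - β) / (2 * β)) * (‖r‖ ^ 2 - ‖r - lam • u‖ ^ 2 + ‖lam • u‖ ^ 2)
      + 2 * γ * (1 + (γ - β) / (2 * β)) * ⟪e, lam • u⟫
      = lam / β * ((γ + β) * (⟪r, u⟫ + γ * ⟪e, u⟫)) := by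
    rw [norm_sq_sub_norm_sq_sub_smul, norm_smul, mul_pow, Real.norm_eq_abs, sq_abs,
      real_inner_smul_right]
    field_simp
    ring
  rw [hrhs]
  calc 2 * γ * lam * Δ = lam / β * (2 * β * γ * Δ) := by field_simp
    _ ≤ _ := by gcongr

end Estimates

theorem fdrs_fundamental_inequality_lipschitz_f_general
    {H : Type*} [NormedAddCommGroup H] [InnerProductSpace ℝ H] [CompleteSpace H]
    (V : Submodule ℝ H) [CompleteSpace V]
    (PV : H → H) (hPV : ∀ x, PV x = (V.orthogonalProjectionOnto x : H))
    (f g : H → ℝ) (gradg gradh gradf proxf : H → H) (h : H → ℝ)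
    (βV γ βf : ℝ) (hβf : 0 < βf)
    (hγ : γ ∈ Set.Ioo (0 : ℝ) (2 * βV))
    (hfconv : ConvexOn ℝ Set.univ f)
    (hgconv : ConvexOn ℝ Set.univ g)
    (hgdiff : ∀ x, HasGradientAt g (gradg x) x)
    (hh : ∀ x, h x = g (PV x))
    (hgradh : ∀ x, gradh x = PV (gradg (PV x)))
    (hfgrad : ∀ x, HasGradientAt f (gradf x) x)
    (hfgradlip : LipschitzWith (1 / βf).toNNReal gradf)
    (hprox : ∀ x, IsMinOn (fun y => f y + (1 / (2 * γ)) * ‖y - x‖ ^ 2) Set.univ (proxf x))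
    (T : H → H)
    (hT : ∀ z, T z = (1 / 2 : ℝ) • (z - γ • gradh z)
        + (1 / 2 : ℝ) • ((2 : ℝ) • proxf ((2 : ℝ) • PV (z - γ • gradh z) - (z - γ • gradh z))
            - ((2 : ℝ) • PV (z - γ • gradh z) - (z - γ • gradh z))))
    -- z, λ, z⁺, a fixed point z*, x* := P_V z*, and the associated points
    (z zp xh xf zs xs : H) (lam : ℝ) (hlam : 0 < lam)
    (hzp : zp = (1 - lam) • z + lam • T z)
    (hzs : T zs = zs) (hxs : xs = PV zs)
    (hxh : xh = PV z)
    (hxf : xf = proxf ((2 : ℝ) • PV (z - γ • gradh z) - (z - γ • gradh z))) :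
    (γ ≤ βf →
      2 * γ * lam * (f xh + h xh - f xs - h xs)
        ≤ ‖z - zs‖ ^ 2 - ‖zp - zs‖ ^ 2 + (1 + (γ - βf) / (βf * lam)) * ‖z - zp‖ ^ 2
          + 2 * γ * ⟪gradh xh - gradh xs, z - zp⟫) ∧
    (γ > βf →
      2 * γ * lam * (f xh + h xh - f xs - h xs)
        ≤ (1 + (γ - βf) / (2 * βf))
            * (‖z - zs‖ ^ 2 - ‖zp - zs‖ ^ 2 + ‖z - zp‖ ^ 2)
          + 2 * γ * (1 + (γ - βf) / (2 * βf)) * ⟪gradh xh - gradh xs, z - zp⟫) := by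
  obtain rfl : PV = V.starProjection := funext hPV
  obtain rfl : h = g ∘ V.starProjection := funext hh
  have hgradV (x : H) : gradh x ∈ V := hgradh x ▸ V.starProjection_apply_mem _
  have hgradP (x : H) : gradh (V.starProjection x) = gradh x := by
    rw [hgradh, hgradh, V.starProjection_eq_self_iff.2 (V.starProjection_apply_mem x)]
  have hh' (x : H) : HasGradientAt (g ∘ V.starProjection) (gradh x) x :=
    hgradh x ▸ V.hasGradientAt_comp_starProjection (hgdiff _)
  have hhconv : ConvexOn ℝ univ (g ∘ V.starProjection) := by
    simpa using hgconv.comp_linearMap V.starProjection.toLinearMap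
  obtain ⟨hTz, hopt⟩ :=
    fdrs_step_identities V hγ.1.ne' hfgrad hprox hT hgradV hgradP hxh hxf
  obtain ⟨hTzs, hopt_fix⟩ :=
    fdrs_step_identities V hγ.1.ne' hfgrad hprox hT hgradV hgradP hxs rfl
  have hfix :
      proxf ((2 : ℝ) • V.starProjection (zs - γ • gradh zs) - (zs - γ • gradh zs)) = xs := by
    linear_combination (norm := module) hzs - hTzs
  rw [hfix] at hopt_fix
  have hstep : z - zp = lam • (xh - xf) := by rw [hzp, hTz]; module
  have hres : z - zs = (xh - xf) + (xh - xs) - γ • (gradf xf - gradf xs)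
      - γ • (gradh xh - gradh xs) := by
    linear_combination (norm := module) hopt - hopt_fix
  have hw : xh - xs ∈ V :=
    hxh ▸ hxs ▸ sub_mem (V.starProjection_apply_mem z) (V.starProjection_apply_mem zs)
  have hgap := fdrs_value_gap hfconv hβf hfgrad hfgradlip hhconv hγ.1.le (hh' xh) hopt
    (hxh ▸ V.starProjection_inner_eq_zero z _ (hxh ▸ hw))
  rw [show zp - zs = (z - zs) - lam • (xh - xf) by rw [← hstep]; abel, hstep]
  refine ⟨fun hle => fdrs_estimate_of_le hβf hγ.1.le hle hlam hgap hres,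
    fun hgt => fdrs_estimate_of_ge hβf hγ.1.le hgt.le hlam hgap hres ?_
      (by simpa using hfconv.gradient_cocoercive hβf hfgrad hfgradlip xf xs) ?_⟩
  · rw [hxh, hxs, ← map_sub]; exact V.inner_starProjection_self _
  · exact hhconv.inner_gradient_sub_nonneg hh' xh xs

/-- the fundamental inequality when f is Lipschitz differentiable. -/
theorem fdrs_fundamental_inequality_lipschitz_f
    {H : Type*} [NormedAddCommGroup H] [InnerProductSpace ℝ H] [CompleteSpace H]
    (V : Submodule ℝ H) [CompleteSpace V]
    (PV : H → H) (hPV : ∀ x, PV x = (V.orthogonalProjectionOnto x : H))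
    (f g : H → ℝ) (gradg gradh gradf proxf : H → H) (h : H → ℝ)
    (β βV γ βf : ℝ) (hβ : 0 < β) (hβV : 0 < βV) (hβf : 0 < βf)
    (hγ : γ ∈ Set.Ioo (0 : ℝ) (2 * βV))
    (hfconv : ConvexOn ℝ Set.univ f) (hfcont : Continuous f)
    (hgconv : ConvexOn ℝ Set.univ g)
    (hgdiff : ∀ x, HasGradientAt g (gradg x) x)
    (hglip : LipschitzWith (1 / β).toNNReal gradg)
    (hh : ∀ x, h x = g (PV x))
    (hgradh : ∀ x, gradh x = PV (gradg (PV x)))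
    (hgradhlip : LipschitzWith (1 / βV).toNNReal gradh)
    (hfgrad : ∀ x, HasGradientAt f (gradf x) x)
    (hfgradlip : LipschitzWith (1 / βf).toNNReal gradf)
    (hprox : ∀ x, IsMinOn (fun y => f y + (1 / (2 * γ)) * ‖y - x‖ ^ 2) Set.univ (proxf x))
    (T : H → H)
    (hT : ∀ z, T z = (1 / 2 : ℝ) • (z - γ • gradh z)
        + (1 / 2 : ℝ) • ((2 : ℝ) • proxf ((2 : ℝ) • PV (z - γ • gradh z) - (z - γ • gradh z))
            - ((2 : ℝ) • PV (z - γ • gradh z) - (z - γ • gradh z))))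
    -- z, λ, z⁺, a fixed point z*, x* := P_V z*, and the associated points
    (z zp xh xf zs xs : H) (lam : ℝ) (hlam : 0 < lam)
    (hzp : zp = (1 - lam) • z + lam • T z)
    (hzs : T zs = zs) (hxs : xs = PV zs)
    (hxh : xh = PV z)
    (hxf : xf = proxf ((2 : ℝ) • PV (z - γ • gradh z) - (z - γ • gradh z))) :
    (γ ≤ βf →
      2 * γ * lam * (f xh + h xh - f xs - h xs)
        ≤ ‖z - zs‖ ^ 2 - ‖zp - zs‖ ^ 2 + (1 + (γ - βf) / (βf * lam)) * ‖z - zp‖ ^ 2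
          + 2 * γ * ⟪gradh xh - gradh xs, z - zp⟫) ∧
    (γ > βf →
      2 * γ * lam * (f xh + h xh - f xs - h xs)
        ≤ (1 + (γ - βf) / (2 * βf))
            * (‖z - zs‖ ^ 2 - ‖zp - zs‖ ^ 2 + ‖z - zp‖ ^ 2)
          + 2 * γ * (1 + (γ - βf) / (2 * βf)) * ⟪gradh xh - gradh xs, z - zp⟫) :=
  fdrs_fundamental_inequality_lipschitz_f_general V PV hPV f g gradg gradh gradf proxf h βV γ βf hβf
    hγ hfconv hgconv hgdiff hh hgradh hfgrad hfgradlip hprox T hT z zp xh xf zs xs lam hlam hzp hzs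
    hxs hxh hxf
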